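/- arXiv:2203.16889 — 11 statements merged into one kernel-verified Lean document; each statement's English description precedes it below -/
import Mathlib

section
/- Let n ∈ ℕ, t, λ ∈ ℂ, and let p be a monic polynomial of degree n over ℂ satisfying p''(x) + (2x² + t)·p'(x) − 2n·x·p(x) = λ·p(x) for all x ∈ ℂ. Then for all 0 ≤ j ≤ n and k ∈ {1,3,5} the ray integrals I_k(x ↦ x^j·p(x)·exp(2θ(x;t))) converge, and there exist κ, κ̃ ∈ ℂ, not both zero, such that for every j with 0 ≤ j ≤ n: κ·[I₃ − I₁](x ↦ x^j·p(x)·e^{2θ(x;t)}) + κ̃·[I₃ − I₅](x ↦ x^j·p(x)·e^{2θ(x;t)}) = 0. That is, p is a 1-degenerate orthogonal polynomial with respect to the weight e^{2θ(x;t)} on the contour Γ = κ·γ + κ̃·γ̃: it is orthogonal to all powers x⁰, x¹, …, xⁿ, including the n-th power. -/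
/-- Direction at infinity of argument kπ/3. -/
noncomputable def rayDir (k : ℕ) : ℂ := Complex.exp ((k : ℂ) * Real.pi * Complex.I / 3)

/-- Ray integral I_k(f) = ω_k · ∫₀^∞ f(r·ω_k) dr. -/
noncomputable def rayIntegral (k : ℕ) (f : ℂ → ℂ) : ℂ :=
  rayDir k * ∫ r in Set.Ioi (0 : ℝ), f ((r : ℂ) * rayDir k)

/-
Along a ray `r ↦ r ω` with `Re ω³ < 0` the weight `e^{2θ}` decays like `exp (-c r³)`, so the ray
integral `q ↦ ∫ q e^{2θ}` is a linear functional on polynomials, and the fundamental theorem of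
calculus applied to `q e^{2θ}` gives `I_ω (q' + 2θ' q) = -q(0)`. Hence the differences `I₃ - I₁`
and `I₃ - I₅`, and every combination `L` of them, annihilate `D q := q' + 2θ' q`; choose the
combination (not both coefficients zero) with `L p = 0`.
The equation says `D p' = (2nx + λ) p`, so `D (r p') - D (r' p) = ((2nx + λ) r - 2θ' r' - r'') p`.
Taking `r = x^j` gives the recurrence
`2(n - j) L(x^{j+1} p) + λ L(x^j p) - j t L(x^{j-1} p) - j(j-1) L(x^{j-2} p) = 0`,
which forces `L(x^j p) = 0` for all `j ≤ n`, as `n - j ≠ 0` for `j < n`.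
-/

open MeasureTheory Set Filter Asymptotics Polynomial Complex
open scoped Topology

-- `q ↦ q' + 2θ' q`, so that `(q e^{2θ})' = (twistedDerivative t q) e^{2θ}`.
noncomputable def twistedDerivative {R : Type*} [CommSemiring R] (t : R) (q : R[X]) : R[X] :=
  derivative q + (C 2 * X ^ 2 + C t) * q

section Recurrence

variable {R : Type*} [CommRing R] {t lam : R} {n : ℕ} {p : R[X]}

lemma twistedDerivative_mul_derivative_sub
    (hp : twistedDerivative t (derivative p) = (C (2 * n : R) * X + C lam) * p) (r : R[X]) :
    twistedDerivative t (r * derivative p) - twistedDerivative t (derivative r * p) =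
      ((C (2 * n : R) * X + C lam) * r - (C 2 * X ^ 2 + C t) * derivative r
        - derivative (derivative r)) * p := by
  simp only [twistedDerivative, derivative_mul] at hp ⊢
  linear_combination r * hp

lemma map_X_pow_mul_recurrence (L : R[X] →ₗ[R] R) (hL : ∀ q, L (twistedDerivative t q) = 0)
    (hp : twistedDerivative t (derivative p) = (C (2 * n : R) * X + C lam) * p) (j : ℕ) :
    2 * ((n : R) - j) * L (X ^ (j + 1) * p) + lam * L (X ^ j * p)
      - j * t * L (X ^ (j - 1) * p) - j * (j - 1 : ℕ) * L (X ^ (j - 1 - 1) * p) = 0 := by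
  -- For `j ≤ 1` the exponents `j - 1`, `j - 1 - 1` truncate, but their coefficients vanish.
  have h := congrArg L (twistedDerivative_mul_derivative_sub hp (X ^ j))
  rw [map_sub, hL, hL, sub_zero, eq_comm] at h
  have hX : (j : R[X]) * X ^ 2 * X ^ (j - 1) = (j : R[X]) * X ^ (j + 1) := by
    rcases j with _ | j
    · simp
    · rw [Nat.add_sub_cancel]; ring
  have hpoly : ((C (2 * n : R) * X + C lam) * X ^ j - (C 2 * X ^ 2 + C t) * derivative (X ^ j)
      - derivative (derivative (X ^ j))) * p
      = C (2 * ((n : R) - j)) * (X ^ (j + 1) * p) + C lam * (X ^ j * p)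
        - C (j * t) * (X ^ (j - 1) * p) - C (j * (j - 1 : ℕ) : R) * (X ^ (j - 1 - 1) * p) := by
    simp only [derivative_X_pow, map_mul, map_sub, map_natCast, map_ofNat,
      derivative_natCast_mul]
    linear_combination (-2 * p) * hX
  rw [hpoly] at h
  simpa only [map_sub, map_add, ← smul_eq_C_mul, map_smul, smul_eq_mul] using h

theorem map_X_pow_mul_eq_zero [IsDomain R] [CharZero R] (L : R[X] →ₗ[R] R)
    (hL : ∀ q, L (twistedDerivative t q) = 0)
    (hp : twistedDerivative t (derivative p) = (C (2 * n : R) * X + C lam) * p) (hLp : L p = 0) :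
    ∀ j ≤ n, L (X ^ j * p) = 0 := by
  suffices ∀ j ≤ n, ∀ i ≤ j, L (X ^ i * p) = 0 from fun j hj => this j hj j le_rfl
  intro j hj
  induction j with
  | zero => simpa using hLp
  | succ j ih =>
    have hlow := ih (by omega)
    intro i hi
    rcases Nat.lt_or_eq_of_le hi with hi | rfl
    · exact hlow i (by omega)
    have hrec := map_X_pow_mul_recurrence L hL hp j
    rw [hlow j le_rfl, hlow (j - 1) (by omega), hlow (j - 1 - 1) (by omega)] at hrec
    have hnj : (n : R) - j ≠ 0 := sub_ne_zero.2 (by exact_mod_cast (by omega : n ≠ j))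
    simpa [hnj] using hrec

end Recurrence

noncomputable def cubicWeight (t z : ℂ) : ℂ := cexp (2 * (z ^ 3 / 3 + t * z / 2))

lemma norm_cubicWeight_ofReal_mul (t ω : ℂ) (r : ℝ) :
    ‖cubicWeight t (r * ω)‖ = Real.exp ((t * ω).re * r + 2 / 3 * (ω ^ 3).re * r ^ 3) := by
  have h : 2 * (((r : ℂ) * ω) ^ 3 / 3 + t * (r * ω) / 2)
      = (r : ℂ) * (t * ω) + ((2 / 3 * r ^ 3 : ℝ) : ℂ) * ω ^ 3 := by
    push_cast; ring
  rw [cubicWeight, norm_exp, h, add_re, re_ofReal_mul, re_ofReal_mul]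
  ring_nf

lemma tendsto_mul_add_mul_pow_three_atBot (a : ℝ) {b : ℝ} (hb : b < 0) :
    Tendsto (fun r : ℝ => a * r + b * r ^ 3) atTop atBot := by
  have h : (fun r : ℝ => a * r + b * r ^ 3) = fun r => r * (a + b * r ^ 2) := by
    funext r; ring
  rw [h]
  exact tendsto_id.atTop_mul_atBot₀ <| tendsto_atBot_add_const_left _ a <|
    (tendsto_pow_atTop two_ne_zero).const_mul_atTop_of_neg hb

lemma isBigO_eval_ofReal_mul_exp (q : ℂ[X]) {ω : ℂ} (hω : ω ≠ 0) :
    (fun r : ℝ => q.eval (r * ω)) =O[atTop] Real.exp := by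
  have hray : Tendsto (fun r : ℝ => (r : ℂ) * ω) atTop (Bornology.cobounded ℂ) := by
    rw [← tendsto_norm_atTop_iff_cobounded]
    simpa [norm_mul] using tendsto_abs_atTop_atTop.atTop_mul_const (norm_pos_iff.2 hω)
  have hdeg : q.degree ≤ (X ^ q.natDegree : ℂ[X]).degree := by
    rw [degree_X_pow]; exact degree_le_natDegree
  have hpow : (fun r : ℝ => ((r : ℂ) * ω) ^ q.natDegree) =O[atTop] fun r => r ^ q.natDegree :=
    isBigO_of_le' (c := ‖ω‖ ^ q.natDegree) _ fun r => by simp [mul_pow, mul_comm]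
  refine (((isBigO_cobounded_of_degree_le hdeg).comp_tendsto hray).trans ?_).trans
    (Real.isLittleO_pow_exp_atTop (n := q.natDegree)).isBigO
  exact hpow.congr_left fun r => by simp

lemma isBigO_eval_mul_cubicWeight_exp_neg (t : ℂ) {ω : ℂ} (hω : (ω ^ 3).re < 0) (q : ℂ[X]) :
    (fun r : ℝ => q.eval (r * ω) * cubicWeight t (r * ω)) =O[atTop] fun r => Real.exp (-r) := by
  have hω0 : ω ≠ 0 := by rintro rfl; simp at hω
  have hweight : (fun r : ℝ => cubicWeight t (r * ω)) =O[atTop]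
      fun r => Real.exp ((t * ω).re * r + 2 / 3 * (ω ^ 3).re * r ^ 3) :=
    isBigO_of_le _ fun r => by
      rw [norm_cubicWeight_ofReal_mul, Real.norm_of_nonneg (Real.exp_pos _).le]
  refine ((isBigO_eval_ofReal_mul_exp q hω0).mul hweight).trans ?_
  simp only [← Real.exp_add]
  refine Real.isBigO_exp_comp_exp_comp.2 (Tendsto.isBoundedUnder_le_atBot ?_)
  convert tendsto_mul_add_mul_pow_three_atBot ((t * ω).re + 2) (b := 2 / 3 * (ω ^ 3).re)
    (by linarith) using 2 with r
  simp only [Pi.sub_apply]; ring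

lemma continuous_eval_mul_cubicWeight (t ω : ℂ) (q : ℂ[X]) :
    Continuous fun r : ℝ => q.eval (r * ω) * cubicWeight t (r * ω) := by
  unfold cubicWeight; fun_prop

lemma integrableOn_eval_mul_cubicWeight (t : ℂ) {ω : ℂ} (hω : (ω ^ 3).re < 0) (q : ℂ[X]) :
    IntegrableOn (fun r : ℝ => q.eval (r * ω) * cubicWeight t (r * ω)) (Ioi 0) :=
  (integrableOn_Ici_iff_integrableOn_Ioi (by finiteness)).mp <|
    ((continuous_eval_mul_cubicWeight t ω q).continuousOn.locallyIntegrableOn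
      measurableSet_Ici).integrableOn_of_isBigO_atTop
    (by simpa using isBigO_eval_mul_cubicWeight_exp_neg t hω q)
    ⟨Ioi 0, Ioi_mem_atTop 0, exp_neg_integrableOn_Ioi 0 one_pos⟩

lemma tendsto_eval_mul_cubicWeight (t : ℂ) {ω : ℂ} (hω : (ω ^ 3).re < 0) (q : ℂ[X]) :
    Tendsto (fun r : ℝ => q.eval (r * ω) * cubicWeight t (r * ω)) atTop (𝓝 0) :=
  (isBigO_eval_mul_cubicWeight_exp_neg t hω q).trans_tendsto <|
    Real.tendsto_exp_atBot.comp tendsto_neg_atTop_atBot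

lemma hasDerivAt_cubicWeight (t z : ℂ) :
    HasDerivAt (cubicWeight t) ((2 * z ^ 2 + t) * cubicWeight t z) z := by
  have h : HasDerivAt (fun z : ℂ => 2 * (z ^ 3 / 3 + t * z / 2)) (2 * z ^ 2 + t) z := by
    refine ((((hasDerivAt_pow 3 z).div_const 3).add
      (((hasDerivAt_id z).const_mul t).div_const 2)).const_mul 2).congr_deriv ?_
    norm_num; ring
  exact h.cexp.congr_deriv (mul_comm _ _)

lemma hasDerivAt_eval_mul_cubicWeight (t : ℂ) (q : ℂ[X]) (z : ℂ) :
    HasDerivAt (fun z => q.eval z * cubicWeight t z)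
      ((twistedDerivative t q).eval z * cubicWeight t z) z := by
  refine ((q.hasDerivAt z).mul (hasDerivAt_cubicWeight t z)).congr_deriv ?_
  simp only [twistedDerivative, eval_add, eval_mul, eval_pow, eval_C, eval_X]
  ring

noncomputable def rayFunctional (t : ℂ) {ω : ℂ} (hω : (ω ^ 3).re < 0) : ℂ[X] →ₗ[ℂ] ℂ where
  toFun q := ω * ∫ r in Ioi (0 : ℝ), q.eval (r * ω) * cubicWeight t (r * ω)
  map_add' q₁ q₂ := by
    simp only [eval_add, add_mul, ← mul_add]
    rw [integral_add (integrableOn_eval_mul_cubicWeight t hω q₁)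
      (integrableOn_eval_mul_cubicWeight t hω q₂)]
  map_smul' c q := by
    simp only [eval_smul, smul_eq_mul, mul_assoc, integral_const_mul, RingHom.id_apply]
    ring

lemma rayFunctional_twistedDerivative (t : ℂ) {ω : ℂ} (hω : (ω ^ 3).re < 0) (q : ℂ[X]) :
    rayFunctional t hω (twistedDerivative t q) = -q.eval 0 := by
  have hderiv (r : ℝ) (_ : r ∈ Ici 0) :
      HasDerivAt (fun r : ℝ => q.eval (r * ω) * cubicWeight t (r * ω))
        (ω * ((twistedDerivative t q).eval (r * ω) * cubicWeight t (r * ω))) r := by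
    have hline : HasDerivAt (fun r : ℝ => (r : ℂ) * ω) ω r := by
      simpa using (ofRealCLM.hasDerivAt (x := r)).mul_const ω
    exact ((hasDerivAt_eval_mul_cubicWeight t q (r * ω)).scomp r hline).congr_deriv
      (smul_eq_mul _ _)
  have hftc := integral_Ioi_of_hasDerivAt_of_tendsto' hderiv
    ((integrableOn_eval_mul_cubicWeight t hω _).const_mul ω) (tendsto_eval_mul_cubicWeight t hω q)
  rw [integral_const_mul] at hftc
  simp only [rayFunctional, LinearMap.coe_mk, AddHom.coe_mk, hftc]
  simp [cubicWeight]

lemma rayDir_pow_three_of_odd {k : ℕ} (hk : Odd k) : rayDir k ^ 3 = -1 := by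
  rw [rayDir, ← Complex.exp_nat_mul]
  have : ((3 : ℕ) : ℂ) * (k * Real.pi * I / 3) = k * (Real.pi * I) := by push_cast; ring
  rw [this, Complex.exp_nat_mul, Complex.exp_pi_mul_I, hk.neg_one_pow]

lemma exists_ne_zero_mul_add_mul_eq_zero {R : Type*} [CommRing R] [Nontrivial R] (a b : R) :
    ∃ κ κ' : R, (κ ≠ 0 ∨ κ' ≠ 0) ∧ κ * a + κ' * b = 0 := by
  by_cases hb : b = 0
  · exact ⟨0, 1, Or.inr one_ne_zero, by simp [hb]⟩
  · exact ⟨b, -a, Or.inl hb, by ring⟩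

theorem quasipolynomial_is_degenerate_orthogonal_general
    (n : ℕ) (t lam : ℂ) (p : Polynomial ℂ)
    (heq : ∀ x : ℂ, (p.derivative.derivative).eval x
        + (2 * x ^ 2 + t) * p.derivative.eval x
        - 2 * (n : ℂ) * x * p.eval x = lam * p.eval x) :
    (∀ j ≤ n, ∀ k ∈ ({1, 3, 5} : Set ℕ),
      MeasureTheory.IntegrableOn
        (fun r : ℝ => ((r : ℂ) * rayDir k) ^ j * p.eval ((r : ℂ) * rayDir k) *
          Complex.exp (2 * (((r : ℂ) * rayDir k) ^ 3 / 3 + t * ((r : ℂ) * rayDir k) / 2)))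
        (Set.Ioi 0)) ∧
    ∃ κ κ' : ℂ, (κ ≠ 0 ∨ κ' ≠ 0) ∧ ∀ j ≤ n,
      κ * (rayIntegral 3 (fun x => x ^ j * p.eval x * Complex.exp (2 * (x ^ 3 / 3 + t * x / 2)))
          - rayIntegral 1 (fun x => x ^ j * p.eval x * Complex.exp (2 * (x ^ 3 / 3 + t * x / 2))))
      + κ' * (rayIntegral 3 (fun x => x ^ j * p.eval x * Complex.exp (2 * (x ^ 3 / 3 + t * x / 2)))
          - rayIntegral 5 (fun x => x ^ j * p.eval x * Complex.exp (2 * (x ^ 3 / 3 + t * x / 2))))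
      = 0 := by
  have hω (k : ℕ) (hk : k ∈ ({1, 3, 5} : Set ℕ)) : (rayDir k ^ 3).re < 0 := by
    rw [rayDir_pow_three_of_odd (by rcases hk with rfl | rfl | rfl <;> decide)]
    norm_num
  have hray (j k : ℕ) (hk : k ∈ ({1, 3, 5} : Set ℕ)) :
      rayIntegral k (fun x => x ^ j * p.eval x * cexp (2 * (x ^ 3 / 3 + t * x / 2))) =
        rayFunctional t (hω k hk) (X ^ j * p) := by
    simp [rayIntegral, rayFunctional, cubicWeight]
  refine ⟨fun j _ k hk => ?_, ?_⟩
  · have h := integrableOn_eval_mul_cubicWeight t (hω k hk) (X ^ j * p)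
    simp only [eval_mul, eval_X_pow] at h
    exact h
  set L₁ := rayFunctional t (hω 1 (by simp))
  set L₃ := rayFunctional t (hω 3 (by simp))
  set L₅ := rayFunctional t (hω 5 (by simp))
  obtain ⟨κ, κ', hκ, hLp⟩ := exists_ne_zero_mul_add_mul_eq_zero ((L₃ - L₁) p) ((L₃ - L₅) p)
  have hode : twistedDerivative t (derivative p) = (C (2 * n : ℂ) * X + C lam) * p := by
    refine Polynomial.funext fun x => ?_
    simp only [twistedDerivative, eval_add, eval_mul, eval_pow, eval_C, eval_X]
    linear_combination heq x
  have horth := map_X_pow_mul_eq_zero (κ • (L₃ - L₁) + κ' • (L₃ - L₅))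
    (fun q => by simp [L₁, L₃, L₅, rayFunctional_twistedDerivative]) hode (by simpa using hLp)
  refine ⟨κ, κ', hκ, fun j hj => ?_⟩
  simpa [hray, L₁, L₃, L₅] using horth j hj

/-- a quasi-polynomial eigenfunction yields a 1-degenerate orthogonal
polynomial: the ray integrals converge, and there exist κ, κ̃, not both zero, such that
p is orthogonal to all powers x⁰,…,xⁿ with weight e^{2θ(x;t)} on Γ = κ·γ + κ̃·γ̃. -/
theorem quasipolynomial_is_degenerate_orthogonal
    (n : ℕ) (t lam : ℂ) (p : Polynomial ℂ) (hmonic : p.Monic) (hdeg : p.natDegree = n)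
    (heq : ∀ x : ℂ, (p.derivative.derivative).eval x
        + (2 * x ^ 2 + t) * p.derivative.eval x
        - 2 * (n : ℂ) * x * p.eval x = lam * p.eval x) :
    (∀ j ≤ n, ∀ k ∈ ({1, 3, 5} : Set ℕ),
      MeasureTheory.IntegrableOn
        (fun r : ℝ => ((r : ℂ) * rayDir k) ^ j * p.eval ((r : ℂ) * rayDir k) *
          Complex.exp (2 * (((r : ℂ) * rayDir k) ^ 3 / 3 + t * ((r : ℂ) * rayDir k) / 2)))
        (Set.Ioi 0)) ∧
    ∃ κ κ' : ℂ, (κ ≠ 0 ∨ κ' ≠ 0) ∧ ∀ j ≤ n,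
      κ * (rayIntegral 3 (fun x => x ^ j * p.eval x * Complex.exp (2 * (x ^ 3 / 3 + t * x / 2)))
          - rayIntegral 1 (fun x => x ^ j * p.eval x * Complex.exp (2 * (x ^ 3 / 3 + t * x / 2))))
      + κ' * (rayIntegral 3 (fun x => x ^ j * p.eval x * Complex.exp (2 * (x ^ 3 / 3 + t * x / 2)))
          - rayIntegral 5 (fun x => x ^ j * p.eval x * Complex.exp (2 * (x ^ 3 / 3 + t * x / 2))))
      = 0 :=
  quasipolynomial_is_degenerate_orthogonal_general n t lam p heq
end

section
/- Let x₀ ∈ ℂ and let U be an open neighbourhood of x₀. Let V be holomorphic on U ∖ {x₀} and have a pole of order at most 2 at x₀, i.e. the function x ↦ (x − x₀)²·V(x) extends holomorphically to all of U. Suppose y₁, y₂ : ℂ → ℂ are holomorphic on U, satisfy yᵢ''(x) = V(x)·yᵢ(x) for all x ∈ U ∖ {x₀} (i = 1, 2), and are linearly independent in the sense that their Wronskian satisfies y₁(x₀)·y₂'(x₀) − y₁'(x₀)·y₂(x₀) ≠ 0. Then V extends holomorphically to all of U; in particular V is analytic at x₀ (the apparent singularity is removable). -/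
/-!
Since the Wronskian is nonzero at `x₀`, one of the two solutions, say `y`, has `y x₀ ≠ 0`.
Near `x₀` the equation gives `V = y'' / y` off `x₀`, and `y'' / y` is holomorphic at `x₀`
because `y` is; so setting `V x₀ := y'' x₀ / y x₀` removes the singularity.
-/

open Function Filter Topology

theorem ne_zero_or_ne_zero_of_mul_sub_mul_ne_zero {R : Type*} [CommRing R] {a b c d : R}
    (h : a * d - c * b ≠ 0) : a ≠ 0 ∨ b ≠ 0 := by
  by_contra! hab
  simp [hab.1, hab.2] at h

theorem DifferentiableOn.update_of_differentiableAt {𝕜 E : Type*} [NontriviallyNormedField 𝕜]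
    [NormedAddCommGroup E] [NormedSpace 𝕜 E] [DecidableEq 𝕜] {f : 𝕜 → E} {U : Set 𝕜}
    {x₀ : 𝕜} {c : E}
    (hU : IsOpen U) (hf : DifferentiableOn 𝕜 f (U \ {x₀}))
    (hx₀ : DifferentiableAt 𝕜 (update f x₀ c) x₀) :
    DifferentiableOn 𝕜 (update f x₀ c) U := by
  intro x hx
  rcases eq_or_ne x x₀ with rfl | hne
  · exact hx₀.differentiableWithinAt
  have hfx : DifferentiableAt 𝕜 f x :=
    hf.differentiableAt ((hU.sdiff isClosed_singleton).mem_nhds ⟨hx, hne⟩)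
  refine (hfx.congr_of_eventuallyEq ?_).differentiableWithinAt
  filter_upwards [eventually_ne_nhds hne] with z hz using update_of_ne hz c f

theorem differentiableAt_update_of_deriv_deriv_eq_mul {x₀ : ℂ} {U : Set ℂ} {V y : ℂ → ℂ}
    (hU : IsOpen U) (hx₀ : x₀ ∈ U) (hy : DifferentiableOn ℂ y U)
    (hode : ∀ x ∈ U \ {x₀}, deriv (deriv y) x = V x * y x) (hy₀ : y x₀ ≠ 0) :
    DifferentiableAt ℂ (update V x₀ (deriv (deriv y) x₀ / y x₀)) x₀ := by
  have hyx₀ : DifferentiableAt ℂ y x₀ := hy.differentiableAt (hU.mem_nhds hx₀)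
  have hy'' : DifferentiableAt ℂ (deriv (deriv y)) x₀ :=
    ((hy.analyticOnNhd hU).deriv.deriv x₀ hx₀).differentiableAt
  refine (hy''.div hyx₀ hy₀).congr_of_eventuallyEq ?_
  filter_upwards [hU.mem_nhds hx₀, hyx₀.continuousAt.eventually_ne hy₀] with z hzU hz
  rcases eq_or_ne z x₀ with rfl | hne
  · simp
  · rw [update_of_ne hne, Pi.div_apply, hode z ⟨hzU, hne⟩, mul_div_cancel_right₀ _ hz]

theorem apparent_singularity_removable_general
    (x₀ : ℂ) (U : Set ℂ) (hU : IsOpen U) (hx₀ : x₀ ∈ U)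
    (V y₁ y₂ : ℂ → ℂ)
    (hV : DifferentiableOn ℂ V (U \ {x₀}))
    (hy₁ : DifferentiableOn ℂ y₁ U)
    (hode₁ : ∀ x ∈ U \ {x₀}, deriv (deriv y₁) x = V x * y₁ x)
    (hy₂ : DifferentiableOn ℂ y₂ U)
    (hode₂ : ∀ x ∈ U \ {x₀}, deriv (deriv y₂) x = V x * y₂ x)
    (hWr : y₁ x₀ * deriv y₂ x₀ - deriv y₁ x₀ * y₂ x₀ ≠ 0) :
    ∃ Vext : ℂ → ℂ, DifferentiableOn ℂ Vext U ∧ ∀ x ∈ U \ {x₀}, Vext x = V x := by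
  obtain ⟨y, hy, hode, hy₀⟩ : ∃ y : ℂ → ℂ, DifferentiableOn ℂ y U ∧
      (∀ x ∈ U \ {x₀}, deriv (deriv y) x = V x * y x) ∧ y x₀ ≠ 0 := by
    rcases ne_zero_or_ne_zero_of_mul_sub_mul_ne_zero hWr with h | h
    exacts [⟨y₁, hy₁, hode₁, h⟩, ⟨y₂, hy₂, hode₂, h⟩]
  refine ⟨update V x₀ (deriv (deriv y) x₀ / y x₀), hV.update_of_differentiableAt hU
    (differentiableAt_update_of_deriv_deriv_eq_mul hU hx₀ hy hode hy₀),
    fun x hx ↦ update_of_ne hx.2 _ V⟩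

/-- an apparent singularity of y'' = V·y where V has a pole of order
at most 2 is removable: V extends holomorphically. -/
theorem apparent_singularity_removable
    (x₀ : ℂ) (U : Set ℂ) (hU : IsOpen U) (hx₀ : x₀ ∈ U)
    (V y₁ y₂ : ℂ → ℂ)
    (hV : DifferentiableOn ℂ V (U \ {x₀}))
    (hpole : ∃ W : ℂ → ℂ, DifferentiableOn ℂ W U ∧
      ∀ x ∈ U \ {x₀}, W x = (x - x₀) ^ 2 * V x)
    (hy₁ : DifferentiableOn ℂ y₁ U)
    (hode₁ : ∀ x ∈ U \ {x₀}, deriv (deriv y₁) x = V x * y₁ x)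
    (hy₂ : DifferentiableOn ℂ y₂ U)
    (hode₂ : ∀ x ∈ U \ {x₀}, deriv (deriv y₂) x = V x * y₂ x)
    (hWr : y₁ x₀ * deriv y₂ x₀ - deriv y₁ x₀ * y₂ x₀ ≠ 0) :
    ∃ Vext : ℂ → ℂ, DifferentiableOn ℂ Vext U ∧ ∀ x ∈ U \ {x₀}, Vext x = V x :=
  apparent_singularity_removable_general x₀ U hU hx₀ V y₁ y₂ hV hy₁ hode₁ hy₂ hode₂ hWr
end

section
/- Let n ≥ 1, t ∈ ℂ, and let x₁, …, xₙ be distinct complex numbers; set p(x) := ∏_{j=1}^{n} (x − x_j) and F(x) := p(x)·exp(θ(x;t)). Then F''(x) = (x⁴ + t·x² + 2(n+1)·x + Λ)·F(x) holds for all x ∈ ℂ with Λ := t²/4 + 2·∑_{j=1}^{n} x_j, if and only if the points satisfy the Fekete-type equilibrium equations θ'(x_j;t) = ∑_{k ≠ j} 1/(x_k − x_j), i.e. x_j² + t/2 = ∑_{k ≠ j} 1/(x_k − x_j), for every j = 1, …, n. -/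
/-!
Write `P = ∏ (X - x_j)` and `θ' = X² + t/2`. Since `F = P e^θ` has
`F'' = (P'' + 2θ'P' + (θ'' + θ'²)P) e^θ`, the ODE is the Heine–Stieltjes equation
`P'' + 2θ'P' = 2(nX + ∑ x_j) P`. The identity
`X² P' = (nX + ∑ x_j) P + ∑_j x_j² ∏_{k≠j} (X - x_k)` shows that the difference of the two
sides has degree `< n`, so it vanishes iff it vanishes at the `n` distinct roots. At `x_j` we
have `P'(x_j) = ∏_{k≠j} (x_j - x_k) ≠ 0` and `P''(x_j) = 2 P'(x_j) ∑_{k≠j} 1/(x_j - x_k)`,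
which turns the equation at `x_j` into the Fekete equation.
-/

open Polynomial Finset

namespace Polynomial

variable {R ι : Type*} [CommRing R]

theorem degree_prod_X_sub_C [Nontrivial R] (s : Finset ι) (f : ι → R) :
    degree (∏ i ∈ s, (X - C (f i))) = #s := by
  rw [degree_eq_natDegree (monic_prod_of_monic _ _ fun i _ => monic_X_sub_C (f i)).ne_zero,
    natDegree_prod_of_monic _ _ fun i _ => monic_X_sub_C (f i)]
  simp

theorem eval_derivative_X_sub_C_mul_self (a : R) (q : R[X]) :
    (derivative ((X - C a) * q)).eval a = q.eval a := by
  simp [derivative_mul]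

theorem eval_derivative_derivative_X_sub_C_mul_self (a : R) (q : R[X]) :
    (derivative (derivative ((X - C a) * q))).eval a = 2 * (derivative q).eval a := by
  simp only [derivative_mul, derivative_sub, derivative_X, derivative_C, sub_zero, one_mul,
    derivative_add, eval_add, eval_mul, eval_sub, eval_X, eval_C, sub_self, zero_mul, add_zero]
  ring

variable [DecidableEq ι]

theorem derivative_prod_X_sub_C (s : Finset ι) (f : ι → R) :
    derivative (∏ i ∈ s, (X - C (f i))) = ∑ i ∈ s, ∏ j ∈ s.erase i, (X - C (f j)) := by
  simp only [derivative_prod_finset, derivative_X_sub_C, mul_one]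

theorem X_sq_mul_derivative_prod_X_sub_C (s : Finset ι) (f : ι → R) :
    X ^ 2 * derivative (∏ i ∈ s, (X - C (f i)))
      = ((#s : R[X]) * X + C (∑ i ∈ s, f i)) * ∏ i ∈ s, (X - C (f i))
        + ∑ i ∈ s, f i ^ 2 • ∏ j ∈ s.erase i, (X - C (f j)) := by
  have hsplit (i) (hi : i ∈ s) : X ^ 2 * ∏ j ∈ s.erase i, (X - C (f j))
      = (X + C (f i)) * ∏ j ∈ s, (X - C (f j))
        + f i ^ 2 • ∏ j ∈ s.erase i, (X - C (f j)) := by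
    rw [← mul_prod_erase s _ hi, smul_eq_C_mul, C_pow]
    ring
  rw [derivative_prod_X_sub_C, mul_sum, sum_congr rfl hsplit, sum_add_distrib, ← sum_mul,
    sum_add_distrib, sum_const, nsmul_eq_mul, ← map_sum]

theorem degree_sum_smul_prod_erase_X_sub_C_lt [Nontrivial R] (s : Finset ι) (f g : ι → R) :
    degree (∑ i ∈ s, g i • ∏ j ∈ s.erase i, (X - C (f j))) < #s := by
  refine (degree_sum_le _ _).trans_lt <|
    (Finset.sup_lt_iff (WithBot.bot_lt_coe _)).2 fun i hi => ?_
  calc degree (g i • ∏ j ∈ s.erase i, (X - C (f j)))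
      ≤ degree (∏ j ∈ s.erase i, (X - C (f j))) := degree_smul_le _ _
    _ < #s := by
      rw [degree_prod_X_sub_C, card_erase_of_mem hi]
      exact_mod_cast Nat.sub_lt (card_pos.2 ⟨i, hi⟩) one_pos

variable {K : Type*} [Field K]

theorem eval_derivative_prod_X_sub_C (s : Finset ι) (f : ι → K) {r : K}
    (hr : ∀ i ∈ s, r ≠ f i) :
    (derivative (∏ i ∈ s, (X - C (f i)))).eval r
      = (∑ i ∈ s, 1 / (r - f i)) * ∏ i ∈ s, (r - f i) := by
  rw [derivative_prod_X_sub_C, eval_finsetSum, sum_mul]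
  refine sum_congr rfl fun i hi => ?_
  have : r - f i ≠ 0 := sub_ne_zero.2 (hr i hi)
  simp only [eval_prod, eval_sub, eval_X, eval_C, ← mul_prod_erase s (fun j => r - f j) hi]
  field_simp

theorem eval_derivative_derivative_prod_X_sub_C_add_at_root {s : Finset ι} {x : ι → K}
    (hx : Set.InjOn x s) {j : ι} (hj : j ∈ s) (b : K) :
    (derivative (derivative (∏ i ∈ s, (X - C (x i))))).eval (x j)
        + 2 * b * (derivative (∏ i ∈ s, (X - C (x i)))).eval (x j)
      = 2 * (b - ∑ k ∈ s.erase j, 1 / (x k - x j)) * ∏ k ∈ s.erase j, (x j - x k) := by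
  have hne : ∀ k ∈ s.erase j, x j ≠ x k := fun k hk h =>
    ne_of_mem_erase hk (hx (mem_of_mem_erase hk) hj h.symm)
  have hflip : ∑ k ∈ s.erase j, 1 / (x j - x k) = -∑ k ∈ s.erase j, 1 / (x k - x j) := by
    rw [← sum_neg_distrib]
    exact sum_congr rfl fun k _ => by rw [← neg_sub, div_neg]
  rw [← mul_prod_erase s _ hj, eval_derivative_derivative_X_sub_C_mul_self,
    eval_derivative_X_sub_C_mul_self, eval_derivative_prod_X_sub_C _ _ hne, hflip]
  simp only [eval_prod, eval_sub, eval_X, eval_C]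
  ring

end Polynomial

theorem heine_stieltjes_eq_iff_fekete {K ι : Type*} [Field K] [NeZero (2 : K)] [DecidableEq ι]
    {s : Finset ι} {x : ι → K} (hx : Set.InjOn x s) (c : K) :
    (∀ z, (derivative (derivative (∏ i ∈ s, (X - C (x i))))).eval z
          + 2 * (z ^ 2 + c) * (derivative (∏ i ∈ s, (X - C (x i)))).eval z
        = (2 * (#s : K) * z + 2 * ∑ i ∈ s, x i) * (∏ i ∈ s, (X - C (x i))).eval z) ↔
      ∀ j ∈ s, x j ^ 2 + c = ∑ k ∈ s.erase j, 1 / (x k - x j) := by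
  set P : K[X] := ∏ i ∈ s, (X - C (x i))
  set D : K[X] := derivative (derivative P) + (2 * c) • derivative P
    + (2 : K) • ∑ i ∈ s, x i ^ 2 • ∏ k ∈ s.erase i, (X - C (x k))
  have hD (z : K) : D.eval z
      = (derivative (derivative P)).eval z + 2 * (z ^ 2 + c) * (derivative P).eval z
        - (2 * (#s : K) * z + 2 * ∑ i ∈ s, x i) * P.eval z := by
    have := congr_arg (eval z) (X_sq_mul_derivative_prod_X_sub_C s x)
    simp only [eval_mul, eval_add, eval_pow, eval_X, eval_C, eval_natCast] at this
    simp only [D, P, eval_add, eval_smul, smul_eq_mul]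
    linear_combination (-2) * this
  have hP' : degree (derivative P) < #s := degree_prod_X_sub_C s x ▸
    degree_derivative_lt (monic_prod_of_monic _ _ fun i _ => monic_X_sub_C (x i)).ne_zero
  have hdegD : degree D < #s :=
    (degree_add_le _ _).trans_lt <| max_lt ((degree_add_le _ _).trans_lt <| max_lt
      (degree_derivative_le.trans_lt hP') ((degree_smul_le _ _).trans_lt hP'))
      ((degree_smul_le _ _).trans_lt (degree_sum_smul_prod_erase_X_sub_C_lt s x _))
  have hroot {j} (hj : j ∈ s) : D.eval (x j)
      = 2 * (x j ^ 2 + c - ∑ k ∈ s.erase j, 1 / (x k - x j))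
        * ∏ k ∈ s.erase j, (x j - x k) := by
    have hPj : P.eval (x j) = 0 := by simp [P, eval_prod, prod_eq_zero hj]
    rw [hD, eval_derivative_derivative_prod_X_sub_C_add_at_root hx hj, hPj, mul_zero, sub_zero]
  constructor
  · intro h j hj
    have hprod : ∏ k ∈ s.erase j, (x j - x k) ≠ 0 := prod_ne_zero_iff.2 fun k hk =>
      sub_ne_zero.2 fun h => ne_of_mem_erase hk (hx (mem_of_mem_erase hk) hj h.symm)
    have hDj := hroot hj
    rw [hD, h, sub_self, eq_comm] at hDj
    simpa [hprod, sub_eq_zero, two_ne_zero] using hDj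
  · intro h z
    have hD0 : D = 0 := eq_zero_of_degree_lt_of_eval_index_eq_zero s hx hdegD fun j hj => by
      rw [hroot hj, h j hj, sub_self, mul_zero, zero_mul]
    linear_combination (hD z).symm.trans (by rw [hD0, eval_zero])

theorem deriv_eval_mul_exp_cubic (t : ℂ) (p : ℂ[X]) :
    deriv (fun w => p.eval w * Complex.exp (w ^ 3 / 3 + t * w / 2))
      = fun w => (derivative p + (X ^ 2 + C (t / 2)) * p).eval w
          * Complex.exp (w ^ 3 / 3 + t * w / 2) := by
  funext w
  have hθ : HasDerivAt (fun w : ℂ => w ^ 3 / 3 + t * w / 2) (w ^ 2 + t / 2) w :=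
    (((hasDerivAt_pow 3 w).div_const 3).add (((hasDerivAt_id' w).const_mul t).div_const 2))
      |>.congr_deriv (by push_cast; ring)
  refine ((p.hasDerivAt w).mul hθ.cexp).deriv.trans ?_
  simp only [eval_add, eval_mul, eval_pow, eval_X, eval_C]
  ring

theorem deriv_deriv_eval_mul_exp_cubic_eq_iff (t m c : ℂ) (p : ℂ[X]) :
    (∀ z, deriv (deriv fun w => p.eval w * Complex.exp (w ^ 3 / 3 + t * w / 2)) z
        = (z ^ 4 + t * z ^ 2 + 2 * (m + 1) * z + (t ^ 2 / 4 + c))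
          * (p.eval z * Complex.exp (z ^ 3 / 3 + t * z / 2))) ↔
      ∀ z, (derivative (derivative p)).eval z + 2 * (z ^ 2 + t / 2) * (derivative p).eval z
        = (2 * m * z + c) * p.eval z := by
  rw [deriv_eval_mul_exp_cubic, deriv_eval_mul_exp_cubic]
  refine forall_congr' fun z => ?_
  simp only [derivative_add, derivative_mul, derivative_X_pow, derivative_C, eval_add, eval_mul,
    eval_pow, eval_X, eval_C, eval_zero, Nat.cast_ofNat]
  rw [← mul_assoc, mul_left_inj' (Complex.exp_ne_zero _)]
  constructor <;> intro h <;> linear_combination h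

theorem quasipolynomial_iff_fekete_general
    (n : ℕ) (t : ℂ) (x : Fin n → ℂ) (hx : Function.Injective x) :
    (∀ z : ℂ,
      deriv (deriv (fun w => (∏ j, (w - x j)) * Complex.exp (w ^ 3 / 3 + t * w / 2))) z
        = (z ^ 4 + t * z ^ 2 + 2 * ((n : ℂ) + 1) * z + (t ^ 2 / 4 + 2 * ∑ j, x j))
          * ((∏ j, (z - x j)) * Complex.exp (z ^ 3 / 3 + t * z / 2))) ↔
    (∀ j : Fin n, (x j) ^ 2 + t / 2 = ∑ k ∈ Finset.univ.erase j, 1 / (x k - x j)) := by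
  have hP (w : ℂ) : ∏ j, (w - x j) = (∏ j, (X - C (x j))).eval w := by simp [eval_prod]
  have hfekete := heine_stieltjes_eq_iff_fekete (s := univ) hx.injOn (t / 2)
  rw [card_univ, Fintype.card_fin] at hfekete
  simp only [hP, deriv_deriv_eval_mul_exp_cubic_eq_iff, hfekete, mem_univ, forall_const]

/-- for p(x) = ∏(x − x_j) with distinct roots, F = p·e^θ solves the
quartic oscillator ODE with Λ = t²/4 + 2∑x_j iff the roots satisfy the Fekete-type
equilibrium equations x_j² + t/2 = ∑_{k≠j} 1/(x_k − x_j). -/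
theorem quasipolynomial_iff_fekete
    (n : ℕ) (hn : 1 ≤ n) (t : ℂ) (x : Fin n → ℂ) (hx : Function.Injective x) :
    (∀ z : ℂ,
      deriv (deriv (fun w => (∏ j, (w - x j)) * Complex.exp (w ^ 3 / 3 + t * w / 2))) z
        = (z ^ 4 + t * z ^ 2 + 2 * ((n : ℂ) + 1) * z + (t ^ 2 / 4 + 2 * ∑ j, x j))
          * ((∏ j, (z - x j)) * Complex.exp (z ^ 3 / 3 + t * z / 2))) ↔
    (∀ j : Fin n, (x j) ^ 2 + t / 2 = ∑ k ∈ Finset.univ.erase j, 1 / (x k - x j)) :=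
  quasipolynomial_iff_fekete_general n t x hx
end

section
/- Let t, J, Λ ∈ ℂ and let p be a nonzero polynomial over ℂ such that F(x) := p(x)·exp(θ(x;t)) satisfies F''(x) = (x⁴ + t·x² + 2J·x + Λ)·F(x) for all x ∈ ℂ. Then every root of p is simple, i.e. p is squarefree. -/
/-!
Writing `F = p · e^θ`, the operator `e^{-θ} ∘ d/dx ∘ e^θ` acts on polynomials as `r ↦ r' + θ' r`,
so with `V = x⁴ + t x² + 2J x + Λ` the differential equation becomes the polynomial identity
`p'' = -2θ' p' + (V - θ'' - θ'²) p`.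
At a root `z` of `p` of multiplicity `m ≥ 2`, the derivatives `p'` and `p''` have multiplicities
`m - 1` and `m - 2`, whereas the right-hand side is divisible by `(X - z)^(m - 1)`.
-/

open Polynomial

namespace Polynomial

section CharZero

variable {K : Type*} [Field K] [CharZero K]

theorem derivative_ne_zero_of_isRoot {q : K[X]} (hq : q ≠ 0) {z : K} (hz : q.IsRoot z) :
    derivative q ≠ 0 := by
  intro h
  rw [eq_C_of_derivative_eq_zero h] at hq hz
  exact not_isRoot_C _ _ (C_ne_zero.mp hq) hz

theorem rootMultiplicity_le_one_of_derivative_derivative_eq {p a b : K[X]} (hp : p ≠ 0)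
    (h : derivative (derivative p) = a * derivative p + b * p) (z : K) :
    p.rootMultiplicity z ≤ 1 := by
  by_contra! hm
  set m := p.rootMultiplicity z
  have hpz : p.IsRoot z := (rootMultiplicity_pos hp).mp (by omega)
  have hmult' : (derivative p).rootMultiplicity z = m - 1 :=
    derivative_rootMultiplicity_of_root hpz
  obtain ⟨hp', hpz'⟩ := rootMultiplicity_pos'.mp (show 0 < (derivative p).rootMultiplicity z by omega)
  have hmult'' : (derivative (derivative p)).rootMultiplicity z = m - 2 := by
    rw [derivative_rootMultiplicity_of_root hpz', hmult']
    omega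
  have hdvd : (X - C z) ^ (m - 1) ∣ derivative (derivative p) := by
    rw [h]
    refine dvd_add (dvd_mul_of_dvd_right ?_ a) (dvd_mul_of_dvd_right ?_ b)
    · simpa [hmult'] using pow_rootMultiplicity_dvd (derivative p) z
    · exact (pow_dvd_pow _ (Nat.sub_le m 1)).trans (pow_rootMultiplicity_dvd p z)
  have := (le_rootMultiplicity_iff (derivative_ne_zero_of_isRoot hp' hpz')).mpr hdvd
  omega

theorem squarefree_of_derivative_derivative_eq [IsAlgClosed K] {p a b : K[X]} (hp : p ≠ 0)
    (h : derivative (derivative p) = a * derivative p + b * p) : Squarefree p := by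
  classical
  refine Separable.squarefree ((nodup_roots_iff_of_splits hp (IsAlgClosed.splits p)).mp ?_)
  rw [Multiset.nodup_iff_count_le_one]
  intro z
  rw [count_roots]
  exact rootMultiplicity_le_one_of_derivative_derivative_eq hp h z

end CharZero

end Polynomial

/-- The derivative conjugated by `exp s`, i.e. `r ↦ e^{-s} (r e^s)'`. -/
noncomputable def expConjDerivative (s r : ℂ[X]) : ℂ[X] :=
  derivative r + r * derivative s

theorem hasDerivAt_eval_mul_cexp_eval (s r : ℂ[X]) (x : ℂ) :
    HasDerivAt (fun w => r.eval w * Complex.exp (s.eval w))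
      ((expConjDerivative s r).eval x * Complex.exp (s.eval x)) x := by
  refine ((r.hasDerivAt x).mul (s.hasDerivAt x).cexp).congr_deriv ?_
  rw [expConjDerivative, eval_add, eval_mul]
  ring

theorem deriv_deriv_eval_mul_cexp_eval (s r : ℂ[X]) (x : ℂ) :
    deriv (deriv fun w => r.eval w * Complex.exp (s.eval w)) x
      = (expConjDerivative s (expConjDerivative s r)).eval x * Complex.exp (s.eval x) := by
  have hderiv : deriv (fun w => r.eval w * Complex.exp (s.eval w))
      = fun w => (expConjDerivative s r).eval w * Complex.exp (s.eval w) :=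
    funext fun w => (hasDerivAt_eval_mul_cexp_eval s r w).deriv
  rw [hderiv]
  exact (hasDerivAt_eval_mul_cexp_eval s _ x).deriv

theorem derivative_derivative_eq_of_deriv_deriv_eval_mul_cexp_eval {s r V : ℂ[X]}
    (h : ∀ x, deriv (deriv fun w => r.eval w * Complex.exp (s.eval w)) x
      = V.eval x * (r.eval x * Complex.exp (s.eval x))) :
    derivative (derivative r)
      = -(2 * derivative s) * derivative r
        + (V - derivative (derivative s) - derivative s ^ 2) * r := by
  have hconj : expConjDerivative s (expConjDerivative s r) = V * r := by
    refine Polynomial.funext fun x => mul_right_cancel₀ (Complex.exp_ne_zero (s.eval x)) ?_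
    rw [← deriv_deriv_eval_mul_cexp_eval, h, eval_mul, mul_assoc]
  simp only [expConjDerivative, derivative_add, derivative_mul] at hconj
  linear_combination hconj

/-- if F = p·e^θ solves the quartic anharmonic oscillator ODE, then
all roots of p are simple, i.e. p is squarefree. -/
theorem quasipolynomial_roots_simple
    (t J Λ : ℂ) (p : Polynomial ℂ) (hp : p ≠ 0)
    (hode : ∀ x : ℂ,
      deriv (deriv (fun w => p.eval w * Complex.exp (w ^ 3 / 3 + t * w / 2))) x
        = (x ^ 4 + t * x ^ 2 + 2 * J * x + Λ)
          * (p.eval x * Complex.exp (x ^ 3 / 3 + t * x / 2))) :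
    Squarefree p := by
  set θ : ℂ[X] := C (1 / 3) * X ^ 3 + C (t / 2) * X
  set V : ℂ[X] := X ^ 4 + C t * X ^ 2 + C (2 * J) * X + C Λ
  have hθ : ∀ w, θ.eval w = w ^ 3 / 3 + t * w / 2 := fun w => by simp [θ]; ring
  have hV : ∀ w, V.eval w = w ^ 4 + t * w ^ 2 + 2 * J * w + Λ := fun w => by simp [V]
  have hode' : ∀ x, deriv (deriv fun w => p.eval w * Complex.exp (θ.eval w)) x
      = V.eval x * (p.eval x * Complex.exp (θ.eval x)) := by
    simpa only [hθ, hV] using hode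
  exact squarefree_of_derivative_derivative_eq hp
    (derivative_derivative_eq_of_deriv_deriv_eval_mul_cexp_eval hode')
end

section
/- Let U ⊆ ℂ be open, α ∈ ℂ, and let u, v, w : ℂ → ℂ be differentiable on U and satisfy, for all t ∈ U: u'(t) = u(t)² + w(t) + t/2, v'(t) = −u(t)·v(t), and w'(t) = −2·u(t)·w(t) + α − 1/2. Then u satisfies the second Painlevé equation with parameter α on U: u''(t) = 2·u(t)³ + t·u(t) + α for all t ∈ U. -/
open Filter Topology

theorem hasDerivAt_deriv_of_eventually_hasDerivAt {𝕜 F : Type*} [NontriviallyNormedField 𝕜]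
    [NormedAddCommGroup F] [NormedSpace 𝕜 F] {f g : 𝕜 → F} {g' : F} {t : 𝕜}
    (hf : ∀ᶠ s in 𝓝 t, HasDerivAt f (g s) s) (hg : HasDerivAt g g' t) :
    HasDerivAt (deriv f) g' t :=
  hg.congr_of_eventuallyEq (hf.mono fun _ hs => hs.deriv)

theorem system_implies_painleveII_general
    (U : Set ℂ) (hU : IsOpen U) (α : ℂ) (u w : ℂ → ℂ)
    (hu : ∀ t ∈ U, HasDerivAt u ((u t) ^ 2 + w t + t / 2) t)
    (hw : ∀ t ∈ U, HasDerivAt w (-2 * u t * w t + α - 1 / 2) t) :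
    ∀ t ∈ U, deriv (deriv u) t = 2 * (u t) ^ 3 + t * u t + α := by
  intro t ht
  have hrhs : HasDerivAt (fun s => u s ^ 2 + w s + s / 2)
      (2 * u t * (u t ^ 2 + w t + t / 2) + (-2 * u t * w t + α - 1 / 2) + 1 / 2) t := by
    have hsq := (hu t ht).fun_pow 2
    have hid := (hasDerivAt_id' t).div_const (2 : ℂ)
    exact ((hsq.fun_add (hw t ht)).fun_add hid).congr_deriv (by norm_num)
  have hu'' : HasDerivAt (deriv u) _ t :=
    hasDerivAt_deriv_of_eventually_hasDerivAt (eventually_of_mem (hU.mem_nhds ht) hu) hrhs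
  rw [hu''.deriv]
  -- the `2 u w` terms coming from `(u²)'` and from `w'` cancel
  ring

/-- the Jimbo–Miwa compatibility system for (u,v,w) implies that u
satisfies the second Painlevé equation u'' = 2u³ + t·u + α on U. -/
theorem system_implies_painleveII
    (U : Set ℂ) (hU : IsOpen U) (α : ℂ) (u v w : ℂ → ℂ)
    (hu : ∀ t ∈ U, HasDerivAt u ((u t) ^ 2 + w t + t / 2) t)
    (hv : ∀ t ∈ U, HasDerivAt v (-(u t) * v t) t)
    (hw : ∀ t ∈ U, HasDerivAt w (-2 * u t * w t + α - 1 / 2) t) :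
    ∀ t ∈ U, deriv (deriv u) t = 2 * (u t) ^ 3 + t * u t + α :=
  system_implies_painleveII_general U hU α u w hu hw
end

section
/- Let U ⊆ ℂ be open, α ∈ ℂ, and let u, v, w : ℂ → ℂ be differentiable on U with v(t) ≠ 0 for all t ∈ U. For x ∈ ℂ and t ∈ U define the 2×2 complex matrices A(x,t) := [[x² + w(t) + t/2, (x − u(t))·v(t)], [−(2/v(t))·(x·w(t) + u(t)·w(t) − α + 1/2), −(x² + w(t) + t/2)]] and B(x,t) := [[x/2, v(t)/2], [−w(t)/v(t), −x/2]]. Then the zero-curvature (compatibility) equation ∂A/∂t(x,t) − ∂B/∂x(x,t) + A(x,t)·B(x,t) − B(x,t)·A(x,t) = 0 holds for all x ∈ ℂ and all t ∈ U if and only if u, v, w satisfy on U the system: u'(t) = u(t)² + w(t) + t/2, v'(t) = −u(t)·v(t), w'(t) = −2·u(t)·w(t) + α − 1/2. -/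
/-!
Substituting `u' = u² + w + t/2 + Rᵤ`, `v' = -u v + Rᵥ`, `w' = -2 u w + α - 1/2 + R_w`, the
zero-curvature matrix becomes linear in the residuals `Rᵤ, Rᵥ, R_w` with no remaining term. Its
diagonal is `±R_w` and its `(0,1)` entry is `(x - u) Rᵥ - v Rᵤ`, so evaluating at `x = u` and
`x = u + 1` (with `v ≠ 0`) recovers all three residuals.
-/

namespace JimboMiwa

/- The Lax matrices with the values `u(t), v(t), w(t)` (and `u'(t), v'(t), w'(t)` in the
derivatives) as parameters. -/
noncomputable def laxA (α u v w x t : ℂ) : Matrix (Fin 2) (Fin 2) ℂ :=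
  !![x ^ 2 + w + t / 2, (x - u) * v;
    -(2 / v) * (x * w + u * w - α + 1 / 2), -(x ^ 2 + w + t / 2)]

noncomputable def laxB (v w x : ℂ) : Matrix (Fin 2) (Fin 2) ℂ :=
  !![x / 2, v / 2; -(w / v), -(x / 2)]

noncomputable def laxADeriv (α u v w u' v' w' x : ℂ) : Matrix (Fin 2) (Fin 2) ℂ :=
  !![w' + 1 / 2, -u' * v + (x - u) * v';
    2 * v' / v ^ 2 * (x * w + u * w - α + 1 / 2) - 2 / v * (x * w' + u' * w + u * w'),
    -(w' + 1 / 2)]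

noncomputable def laxBDeriv : Matrix (Fin 2) (Fin 2) ℂ :=
  !![1 / 2, 0; 0, -(1 / 2)]

noncomputable def zeroCurvature (α u v w u' v' w' x t : ℂ) : Matrix (Fin 2) (Fin 2) ℂ :=
  laxADeriv α u v w u' v' w' x - laxBDeriv + ⁅laxA α u v w x t, laxB v w x⁆

theorem hasDerivAt_laxA_apply {u v w : ℂ → ℂ} {u' v' w' t : ℂ} (hu : HasDerivAt u u' t)
    (hv : HasDerivAt v v' t) (hw : HasDerivAt w w' t) (hv0 : v t ≠ 0) (α x : ℂ) (i j : Fin 2) :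
    HasDerivAt (fun τ => laxA α (u τ) (v τ) (w τ) x τ i j)
      (laxADeriv α (u t) (v t) (w t) u' v' w' x i j) t := by
  have hdiag : HasDerivAt (fun τ => x ^ 2 + w τ + τ / 2) (w' + 1 / 2) t :=
    ((hasDerivAt_const t (x ^ 2)).add hw).add ((hasDerivAt_id t).div_const 2) |>.congr_deriv
      (by simp)
  have hupper : HasDerivAt (fun τ => (x - u τ) * v τ) (-u' * v t + (x - u t) * v') t :=
    (hu.const_sub x).mul hv |>.congr_deriv (by ring)
  have hlower : HasDerivAt (fun τ => -(2 / v τ) * (x * w τ + u τ * w τ - α + 1 / 2))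
      (2 * v' / v t ^ 2 * (x * w t + u t * w t - α + 1 / 2)
        - 2 / v t * (x * w' + u' * w t + u t * w')) t :=
    ((hasDerivAt_const t (2 : ℂ)).div hv hv0).neg.mul
      ((((hasDerivAt_const t x).mul hw).add (hu.mul hw)).sub_const α |>.add_const (1 / 2 : ℂ))
      |>.congr_deriv (by simp; ring)
  fin_cases i <;> fin_cases j
  · exact hdiag
  · exact hupper
  · exact hlower
  · exact hdiag.neg

theorem hasDerivAt_laxB_apply (v w x : ℂ) (i j : Fin 2) :
    HasDerivAt (fun ξ => laxB v w ξ i j) (laxBDeriv i j) x := by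
  fin_cases i <;> fin_cases j
  · exact (hasDerivAt_id x).div_const 2 |>.congr_deriv (by simp [laxBDeriv])
  · exact hasDerivAt_const x (v / 2)
  · exact hasDerivAt_const x (-(w / v))
  · exact ((hasDerivAt_id x).div_const 2).neg |>.congr_deriv (by simp [laxBDeriv])

theorem zeroCurvature_eq {α u v w u' v' w' x t : ℂ} (hv : v ≠ 0) :
    zeroCurvature α u v w u' v' w' x t =
      let ru := u' - (u ^ 2 + w + t / 2)
      let rv := v' + u * v
      let rw := w' + 2 * u * w - α + 1 / 2
      !![rw, (x - u) * rv - v * ru;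
        2 / v ^ 2 * (x * w + u * w - α + 1 / 2) * rv - 2 * w / v * ru - 2 * (x + u) / v * rw,
        -rw] := by
  ext i j
  fin_cases i <;> fin_cases j <;>
    simp [zeroCurvature, laxADeriv, laxBDeriv, laxA, laxB, Ring.lie_def] <;>
    field_simp <;> ring

theorem zeroCurvature_eq_zero_iff {α u v w u' v' w' t : ℂ} (hv : v ≠ 0) :
    (∀ x, zeroCurvature α u v w u' v' w' x t = 0) ↔
      u' = u ^ 2 + w + t / 2 ∧ v' = -u * v ∧ w' = -2 * u * w + α - 1 / 2 := by
  constructor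
  · intro h
    have entry : ∀ x i j, zeroCurvature α u v w u' v' w' x t i j = 0 := fun x i j => by
      rw [h x, Matrix.zero_apply]
    have h00 := entry 0 0 0
    have h01 := entry u 0 1
    have h01' := entry (u + 1) 0 1
    simp only [zeroCurvature_eq hv, Matrix.of_apply, Matrix.cons_val', Matrix.cons_val_zero,
      Matrix.cons_val_one, Matrix.empty_val', Matrix.cons_val_fin_one] at h00 h01 h01'
    have hru : u' - (u ^ 2 + w + t / 2) = 0 :=
      (mul_eq_zero.1 (by linear_combination -h01)).resolve_left hv
    refine ⟨by linear_combination hru, by linear_combination h01' + v * hru,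
      by linear_combination h00⟩
  · rintro ⟨hu', hv', hw'⟩ x
    have hru : u' - (u ^ 2 + w + t / 2) = 0 := by linear_combination hu'
    have hrv : v' + u * v = 0 := by linear_combination hv'
    have hrw : w' + 2 * u * w - α + 1 / 2 = 0 := by linear_combination hw'
    rw [zeroCurvature_eq hv, hru, hrv, hrw]
    ext i j
    fin_cases i <;> fin_cases j <;> simp

end JimboMiwa

open JimboMiwa

theorem jimbo_miwa_compatibility_general
    (U : Set ℂ) (α : ℂ) (u v w : ℂ → ℂ)
    (hu : ∀ t ∈ U, DifferentiableAt ℂ u t)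
    (hv : ∀ t ∈ U, DifferentiableAt ℂ v t)
    (hw : ∀ t ∈ U, DifferentiableAt ℂ w t)
    (hv0 : ∀ t ∈ U, v t ≠ 0)
    (A B : ℂ → ℂ → Matrix (Fin 2) (Fin 2) ℂ)
    (hA : ∀ x t, A x t = !![x ^ 2 + w t + t / 2, (x - u t) * v t;
        -(2 / v t) * (x * w t + u t * w t - α + 1 / 2), -(x ^ 2 + w t + t / 2)])
    (hB : ∀ x t, B x t = !![x / 2, v t / 2; -(w t / v t), -(x / 2)]) :
    (∀ x : ℂ, ∀ t ∈ U, ∀ i j : Fin 2,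
      deriv (fun τ => A x τ i j) t - deriv (fun ξ => B ξ t i j) x
        + (A x t * B x t - B x t * A x t) i j = 0) ↔
    (∀ t ∈ U,
      deriv u t = (u t) ^ 2 + w t + t / 2 ∧
      deriv v t = -(u t) * v t ∧
      deriv w t = -2 * u t * w t + α - 1 / 2) := by
  have hA' : ∀ x t, A x t = laxA α (u t) (v t) (w t) x t := hA
  have hB' : ∀ x t, B x t = laxB (v t) (w t) x := hB
  have hentry : ∀ t ∈ U, ∀ x i j,
      deriv (fun τ => A x τ i j) t - deriv (fun ξ => B ξ t i j) x
        + (A x t * B x t - B x t * A x t) i j =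
      zeroCurvature α (u t) (v t) (w t) (deriv u t) (deriv v t) (deriv w t) x t i j := by
    intro t ht x i j
    simp only [hA', hB']
    rw [(hasDerivAt_laxA_apply (hu t ht).hasDerivAt (hv t ht).hasDerivAt (hw t ht).hasDerivAt
      (hv0 t ht) α x i j).deriv, (hasDerivAt_laxB_apply (v t) (w t) x i j).deriv]
    rfl
  constructor
  · intro h t ht
    refine (zeroCurvature_eq_zero_iff (hv0 t ht)).1 fun x => ?_
    ext i j
    rw [← hentry t ht]
    exact h x t ht i j
  · intro h x t ht i j
    rw [hentry t ht, (zeroCurvature_eq_zero_iff (hv0 t ht)).2 (h t ht) x, Matrix.zero_apply]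

/-- the zero-curvature equation ∂A/∂t − ∂B/∂x + [A,B] = 0 for the
Jimbo–Miwa Lax pair holds (entrywise) for all x ∈ ℂ, t ∈ U iff (u,v,w) satisfy the
compatibility system. -/
theorem jimbo_miwa_compatibility
    (U : Set ℂ) (hU : IsOpen U) (α : ℂ) (u v w : ℂ → ℂ)
    (hu : ∀ t ∈ U, DifferentiableAt ℂ u t)
    (hv : ∀ t ∈ U, DifferentiableAt ℂ v t)
    (hw : ∀ t ∈ U, DifferentiableAt ℂ w t)
    (hv0 : ∀ t ∈ U, v t ≠ 0)
    (A B : ℂ → ℂ → Matrix (Fin 2) (Fin 2) ℂ)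
    (hA : ∀ x t, A x t = !![x ^ 2 + w t + t / 2, (x - u t) * v t;
        -(2 / v t) * (x * w t + u t * w t - α + 1 / 2), -(x ^ 2 + w t + t / 2)])
    (hB : ∀ x t, B x t = !![x / 2, v t / 2; -(w t / v t), -(x / 2)]) :
    (∀ x : ℂ, ∀ t ∈ U, ∀ i j : Fin 2,
      deriv (fun τ => A x τ i j) t - deriv (fun ξ => B ξ t i j) x
        + (A x t * B x t - B x t * A x t) i j = 0) ↔
    (∀ t ∈ U,
      deriv u t = (u t) ^ 2 + w t + t / 2 ∧
      deriv v t = -(u t) * v t ∧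
      deriv w t = -2 * u t * w t + α - 1 / 2) :=
  jimbo_miwa_compatibility_general U α u v w hu hv hw hv0 A B hA hB
end

section
/- Let U ⊆ ℂ be open, let m₁₁ : ℂ → ℂ be differentiable on U, m₂₁ : ℂ → ℂ arbitrary, m₁₂ : ℂ → ℂ twice differentiable and nowhere zero on U, and let g : ℂ → ℂ be differentiable on U with g(x)² = m₁₂(x) for all x ∈ U. Define M(x) := [[m₁₁(x), m₁₂(x)], [m₂₁(x), −m₁₁(x)]] and the gauge matrix G(x) := [[1/g(x), 0], [−m₁₂'(x)/(2·g(x)³) + m₁₁(x)/g(x), g(x)]]. Then for all x ∈ U: G'(x)·G(x)⁻¹ + G(x)·M(x)·G(x)⁻¹ = [[0, 1], [V(x), 0]], where V(x) := m₁₂(x)·m₂₁(x) + m₁₁(x)² + m₁₁'(x) − m₁₁(x)·m₁₂'(x)/m₁₂(x) − m₁₂''(x)/(2·m₁₂(x)) + (3/4)·(m₁₂'(x)/m₁₂(x))². In particular, if Φ solves the traceless 2×2 system Φ' = M·Φ on U, then W := G·Φ solves W' = [[0,1],[V,0]]·W, i.e. the first row of W solves the scalar ODE y'' = V·y. -/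
/-!
The gauge matrix `G` is lower triangular with determinant one, so its inverse is explicit and
`G' G⁻¹ + G M G⁻¹` is a rational expression in `g, g', m₁₁, m₁₁', m₁₂', m₁₂''`. Differentiating
`g² = m₁₂` near `x` gives `m₁₂' = 2 g g'`; with it the diagonal entries cancel, the upper right
entry is `m₁₂ / g² = 1`, and the lower left entry simplifies to `V`.
-/

open Filter Topology

section
variable {𝕜 : Type*} [NontriviallyNormedField 𝕜]

theorem Matrix.of_deriv_apply_fin_two {G : 𝕜 → Matrix (Fin 2) (Fin 2) 𝕜} {a b c d : 𝕜 → 𝕜}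
    (hG : ∀ z, G z = !![a z, b z; c z, d z]) (x : 𝕜) :
    Matrix.of (fun i j => deriv (fun z => G z i j) x)
      = !![deriv a x, deriv b x; deriv c x, deriv d x] := by
  ext i j
  fin_cases i <;> fin_cases j <;> simp [hG]

theorem deriv_eq_two_mul_deriv_of_eventuallyEq_sq {f g : 𝕜 → 𝕜} {x : 𝕜}
    (hg : DifferentiableAt 𝕜 g x) (hfg : f =ᶠ[𝓝 x] fun z => g z ^ 2) :
    deriv f x = 2 * g x * deriv g x := by
  rw [hfg.deriv_eq, (hg.hasDerivAt.fun_pow 2).deriv]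
  ring

end

section
variable {K : Type*} [Field K]

theorem Matrix.inv_lowerTriangular_fin_two {a : K} (c : K) (ha : a ≠ 0) :
    !![1 / a, 0; c, a]⁻¹ = !![a, 0; -c, 1 / a] := by
  apply Matrix.inv_eq_right_inv
  ext i j
  fin_cases i <;> fin_cases j <;> simp [ha, mul_comm]

theorem gauge_lowerTriangular_fin_two {a : K} (a' c c' p q r : K) (ha : a ≠ 0) :
    !![-a' / a ^ 2, 0; c', a'] * !![a, 0; -c, 1 / a]
        + !![1 / a, 0; c, a] * !![p, q; r, -p] * !![a, 0; -c, 1 / a]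
      = !![p - (a' + q * c) / a, q / a ^ 2;
          c' * a - a' * c + 2 * a * c * p + a ^ 2 * r - c ^ 2 * q, (a' + q * c) / a - p] := by
  ext i j
  fin_cases i <;> fin_cases j <;> simp <;> field
end

theorem gauge_transformation_to_scalar_ode_general
    (U : Set ℂ) (hU : IsOpen U)
    (m11 m21 m12 g : ℂ → ℂ)
    (h11 : ∀ x ∈ U, DifferentiableAt ℂ m11 x)
    (h12' : ∀ x ∈ U, DifferentiableAt ℂ (deriv m12) x)
    (h12ne : ∀ x ∈ U, m12 x ≠ 0)
    (hg : ∀ x ∈ U, DifferentiableAt ℂ g x)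
    (hg2 : ∀ x ∈ U, (g x) ^ 2 = m12 x)
    (M G : ℂ → Matrix (Fin 2) (Fin 2) ℂ)
    (hM : ∀ x, M x = !![m11 x, m12 x; m21 x, -m11 x])
    (hG : ∀ x, G x = !![1 / g x, 0;
        -(deriv m12 x) / (2 * (g x) ^ 3) + m11 x / g x, g x])
    (V : ℂ → ℂ)
    (hV : ∀ x, V x = m12 x * m21 x + (m11 x) ^ 2 + deriv m11 x
        - m11 x * deriv m12 x / m12 x - deriv (deriv m12) x / (2 * m12 x)
        + (3 / 4) * (deriv m12 x / m12 x) ^ 2) :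
    ∀ x ∈ U,
      (Matrix.of fun i j => deriv (fun z => G z i j) x) * (G x)⁻¹
        + G x * M x * (G x)⁻¹ = !![0, 1; V x, 0] := by
  intro x hx
  have hgx : g x ≠ 0 := fun h => h12ne x hx (by simp [← hg2 x hx, h])
  have hdm12 : deriv m12 x = 2 * g x * deriv g x :=
    deriv_eq_two_mul_deriv_of_eventuallyEq_sq (hg x hx) <|
      eventually_of_mem (hU.mem_nhds hx) fun z hz => (hg2 z hz).symm
  have hdg := (hg x hx).hasDerivAt
  have hinv_g : HasDerivAt (fun z => 1 / g z) (-deriv g x / g x ^ 2) x := by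
    simpa only [one_div] using hdg.fun_inv hgx
  have hc : HasDerivAt (fun z => -deriv m12 z / (2 * g z ^ 3) + m11 z / g z) _ x :=
    ((h12' x hx).hasDerivAt.neg.div ((hdg.pow 3).const_mul 2)
      (mul_ne_zero two_ne_zero (pow_ne_zero 3 hgx))).add ((h11 x hx).hasDerivAt.div hdg hgx)
  rw [Matrix.of_deriv_apply_fin_two hG, hG x, Matrix.inv_lowerTriangular_fin_two _ hgx, hM x,
    hinv_g.deriv, deriv_const, hc.deriv, gauge_lowerTriangular_fin_two _ _ _ _ _ _ hgx]
  rw [hV x, ← hg2 x hx]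
  ext i j
  fin_cases i <;> fin_cases j <;> simp [hdm12, hgx] <;> field

/-- the gauge transformation G turns the traceless system Φ' = MΦ
into companion form: G'·G⁻¹ + G·M·G⁻¹ = [[0,1],[V,0]] with the stated potential V. -/
theorem gauge_transformation_to_scalar_ode
    (U : Set ℂ) (hU : IsOpen U)
    (m11 m21 m12 g : ℂ → ℂ)
    (h11 : ∀ x ∈ U, DifferentiableAt ℂ m11 x)
    (h12 : ∀ x ∈ U, DifferentiableAt ℂ m12 x)
    (h12' : ∀ x ∈ U, DifferentiableAt ℂ (deriv m12) x)
    (h12ne : ∀ x ∈ U, m12 x ≠ 0)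
    (hg : ∀ x ∈ U, DifferentiableAt ℂ g x)
    (hg2 : ∀ x ∈ U, (g x) ^ 2 = m12 x)
    (M G : ℂ → Matrix (Fin 2) (Fin 2) ℂ)
    (hM : ∀ x, M x = !![m11 x, m12 x; m21 x, -m11 x])
    (hG : ∀ x, G x = !![1 / g x, 0;
        -(deriv m12 x) / (2 * (g x) ^ 3) + m11 x / g x, g x])
    (V : ℂ → ℂ)
    (hV : ∀ x, V x = m12 x * m21 x + (m11 x) ^ 2 + deriv m11 x
        - m11 x * deriv m12 x / m12 x - deriv (deriv m12) x / (2 * m12 x)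
        + (3 / 4) * (deriv m12 x / m12 x) ^ 2) :
    ∀ x ∈ U,
      (Matrix.of fun i j => deriv (fun z => G z i j) x) * (G x)⁻¹
        + G x * M x * (G x)⁻¹ = !![0, 1; V x, 0] :=
  gauge_transformation_to_scalar_ode_general U hU m11 m21 m12 g h11 h12' h12ne hg hg2 M G hM hG V hV
end

section
/- For every n ∈ ℕ there exists a unique polynomial B ∈ ℂ[X] satisfying B + 2X·B' − (1/2)·B''' = Xⁿ, where ' denotes the formal derivative in ℂ[X]. Moreover this B has degree n and leading coefficient 1/(2n+1). -/
/-!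
The operator `L B = B + 2 X B' - B''' / 2` is linear and acts on coefficients by
`(L B)ₖ = (2k + 1) Bₖ - (k + 1)(k + 2)(k + 3) / 2 · Bₖ₊₃`, so it is triangular in the monomial
basis with diagonal entries `2k + 1 ≠ 0`. Hence `L` preserves degrees and multiplies leading
coefficients by `2 deg B + 1`; a degree-preserving linear endomorphism of `K[X]` is injective,
and maps each finite-dimensional space of polynomials of degree `< d` into itself, so it is
also surjective.
-/

open Polynomial

theorem Polynomial.coeff_X_mul_derivative {R : Type*} [CommSemiring R] (p : R[X]) (k : ℕ) :
    (X * derivative p).coeff k = k * p.coeff k := by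
  cases k with
  | zero => simp
  | succ k => rw [coeff_X_mul, coeff_derivative]; push_cast; ring

theorem Polynomial.bijective_of_degree_map_eq {K : Type*} [Field K] (f : K[X] →ₗ[K] K[X])
    (hf : ∀ p, (f p).degree = p.degree) : Function.Bijective f := by
  have hinj : Function.Injective f := (injective_iff_map_eq_zero f).2 fun p hp => by
    rw [← degree_eq_bot, ← hf, hp, degree_zero]
  refine ⟨hinj, fun q => ?_⟩
  let V := degreeLT K (q.natDegree + 1)
  have : FiniteDimensional K V := (degreeLTEquiv K _).symm.finiteDimensional
  have hmaps : ∀ p ∈ V, f p ∈ V := fun p hp => by rwa [mem_degreeLT, hf, ← mem_degreeLT]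
  have hq : q ∈ V := mem_degreeLT.2 <| degree_le_natDegree.trans_lt <| by
    exact_mod_cast q.natDegree.lt_succ_self
  obtain ⟨p, -, hp⟩ := (LinearMap.injOn_iff_surjOn hmaps).1 hinj.injOn hq
  exact ⟨p, hp⟩

variable (K : Type*) [Field K]

noncomputable def airyOp : K[X] →ₗ[K] K[X] where
  toFun B := B + 2 * X * derivative B - C (1 / 2) * derivative (derivative (derivative B))
  map_add' p q := by simp only [map_add]; ring
  map_smul' a p := by simp only [smul_eq_C_mul, derivative_C_mul, RingHom.id_apply]; ring

variable {K}

theorem coeff_airyOp (B : K[X]) (k : ℕ) :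
    (airyOp K B).coeff k =
      (2 * k + 1) * B.coeff k - (k + 1) * (k + 2) * (k + 3) / 2 * B.coeff (k + 3) := by
  simp only [airyOp, LinearMap.coe_mk, AddHom.coe_mk, coeff_sub, coeff_add, mul_assoc,
    coeff_ofNat_mul, coeff_X_mul_derivative, coeff_C_mul, coeff_derivative]
  push_cast
  ring

theorem coeff_airyOp_of_natDegree_le {B : K[X]} {k : ℕ} (hk : B.natDegree ≤ k) :
    (airyOp K B).coeff k = (2 * k + 1) * B.coeff k := by
  rw [coeff_airyOp, coeff_eq_zero_of_natDegree_lt (by omega : B.natDegree < k + 3)]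
  ring

variable [CharZero K]

theorem degree_airyOp (B : K[X]) : (airyOp K B).degree = B.degree := by
  rcases eq_or_ne B 0 with rfl | hB
  · rw [map_zero]
  have hlead : (airyOp K B).coeff B.natDegree ≠ 0 := by
    rw [coeff_airyOp_of_natDegree_le le_rfl]
    exact mul_ne_zero (by exact_mod_cast (2 * B.natDegree).succ_ne_zero)
      (leadingCoeff_ne_zero.2 hB)
  have hle : (airyOp K B).degree ≤ B.natDegree := (degree_le_iff_coeff_zero _ _).2 fun k hk => by
    have hk : B.natDegree < k := by exact_mod_cast hk
    rw [coeff_airyOp_of_natDegree_le hk.le, coeff_eq_zero_of_natDegree_lt hk, mul_zero]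
  rw [degree_eq_natDegree hB]
  exact le_antisymm hle (le_degree_of_ne_zero hlead)

theorem leadingCoeff_airyOp (B : K[X]) :
    (airyOp K B).leadingCoeff = (2 * B.natDegree + 1) * B.leadingCoeff := by
  rw [leadingCoeff, natDegree_eq_of_degree_eq (degree_airyOp B),
    coeff_airyOp_of_natDegree_le le_rfl, leadingCoeff]

theorem airyOp_bijective : Function.Bijective (airyOp K) :=
  bijective_of_degree_map_eq _ degree_airyOp

/-- for every n there exists a unique polynomial B with
B + 2X·B' − (1/2)B''' = Xⁿ; it has degree n and leading coefficient 1/(2n+1). -/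
theorem airy_primitive_polynomial (n : ℕ) :
    (∃! B : Polynomial ℂ,
      B + 2 * Polynomial.X * Polynomial.derivative B
        - Polynomial.C (1 / 2)
          * Polynomial.derivative (Polynomial.derivative (Polynomial.derivative B))
        = Polynomial.X ^ n) ∧
    (∀ B : Polynomial ℂ,
      B + 2 * Polynomial.X * Polynomial.derivative B
        - Polynomial.C (1 / 2)
          * Polynomial.derivative (Polynomial.derivative (Polynomial.derivative B))
        = Polynomial.X ^ n →
      B.degree = (n : ℕ) ∧ B.leadingCoeff = 1 / (2 * (n : ℂ) + 1)) := by
  obtain ⟨hinj, hsurj⟩ := airyOp_bijective (K := ℂ)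
  obtain ⟨B₀, hB₀⟩ := hsurj (X ^ n)
  refine ⟨⟨B₀, hB₀, fun B hB => hinj (hB.trans hB₀.symm)⟩, fun B hB => ?_⟩
  replace hB : airyOp ℂ B = X ^ n := hB
  have hdeg : B.degree = n := by rw [← degree_airyOp, hB, degree_X_pow]
  have hlc := leadingCoeff_airyOp B
  rw [hB, leadingCoeff_X_pow, natDegree_eq_of_degree_eq_some hdeg] at hlc
  exact ⟨hdeg, eq_one_div_of_mul_eq_one_right hlc.symm⟩
end

section
/- Let n ∈ ℕ and let B ∈ ℂ[X] satisfy B + 2X·B' − (1/2)·B''' = Xⁿ; set A := X·B − (1/2)·B'' and C := B'. Let f, g : ℂ → ℂ be twice differentiable solutions of the Airy equation, i.e. f''(x) = x·f(x) and g''(x) = x·g(x) for all x ∈ ℂ. Then for every x ∈ ℂ, the derivative at x of the function z ↦ A(z)·f(z)·g(z) − B(z)·f'(z)·g'(z) + C(z)·(f(z)·g'(z) + g(z)·f'(z))/2 equals xⁿ·f(x)·g(x). In particular (taking g = f), xⁿ·f(x)² = d/dx [A(x)·f(x)² − B(x)·f'(x)² + C(x)·f(x)·f'(x)]. -/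
/-!
For solutions of `y'' = q y`, the products `P = f g`, `Q = f' g'` and `W = f g' + g f'` satisfy
`P' = W`, `Q' = q W` and `W' = 2 Q + 2 q P`. Hence `a P - b Q + c W / 2` has derivative
`(a' + q c) P + (c - b') Q + (a - q b + c' / 2) W`. With `q = x`, the choices `C = B'` and
`A = X B - B'' / 2` kill the last two coefficients, and the equation for `B` makes the first
one `A' + X B' = B + 2 X B' - B''' / 2 = Xⁿ`.
-/

open Polynomial

theorem hasDerivAt_quadratic_form_of_deriv_deriv_eq {𝕜 : Type*} [RCLike 𝕜]
    {f f' g g' a b c : 𝕜 → 𝕜} {a' b' c' q x : 𝕜}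
    (hf : HasDerivAt f (f' x) x) (hf' : HasDerivAt f' (q * f x) x)
    (hg : HasDerivAt g (g' x) x) (hg' : HasDerivAt g' (q * g x) x)
    (ha : HasDerivAt a a' x) (hb : HasDerivAt b b' x) (hc : HasDerivAt c c' x) :
    HasDerivAt (fun z => a z * f z * g z - b z * f' z * g' z + c z * (f z * g' z + g z * f' z) / 2)
      ((a' + q * c x) * (f x * g x) + (c x - b') * (f' x * g' x)
        + (a x - q * b x + c' / 2) * (f x * g' x + g x * f' x)) x := by
  refine ((((ha.mul hf).mul hg).sub ((hb.mul hf').mul hg')).add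
    ((hc.mul ((hf.mul hg').add (hg.mul hf'))).div_const 2)).congr_deriv ?_
  simp only [Pi.mul_apply, Pi.add_apply]
  ring

theorem derivative_X_mul_sub_C_mul_derivative_derivative {R : Type*} [CommRing R]
    (B : R[X]) (c : R) :
    derivative (X * B - C c * derivative (derivative B))
      = B + X * derivative B - C c * derivative (derivative (derivative B)) := by
  simp only [derivative_sub, derivative_mul, derivative_X, derivative_C, one_mul, zero_mul,
    zero_add]

/-- with B solving B + 2X·B' − (1/2)B''' = Xⁿ, A = X·B − (1/2)B'',
C = B', and f, g solutions of the Airy equation, the function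
A·f·g − B·f'·g' + C·(f·g' + g·f')/2 is an antiderivative of xⁿ·f·g. -/
theorem airy_moment_antiderivative
    (n : ℕ) (Bp Ap Cp : Polynomial ℂ)
    (hB : Bp + 2 * Polynomial.X * Polynomial.derivative Bp
        - Polynomial.C (1 / 2)
          * Polynomial.derivative (Polynomial.derivative (Polynomial.derivative Bp))
        = Polynomial.X ^ n)
    (hA : Ap = Polynomial.X * Bp
        - Polynomial.C (1 / 2) * Polynomial.derivative (Polynomial.derivative Bp))
    (hC : Cp = Polynomial.derivative Bp)
    (f g : ℂ → ℂ)
    (hf : Differentiable ℂ f) (hf' : Differentiable ℂ (deriv f))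
    (hg : Differentiable ℂ g) (hg' : Differentiable ℂ (deriv g))
    (hfode : ∀ x : ℂ, deriv (deriv f) x = x * f x)
    (hgode : ∀ x : ℂ, deriv (deriv g) x = x * g x) :
    ∀ x : ℂ,
      HasDerivAt (fun z => Ap.eval z * f z * g z - Bp.eval z * deriv f z * deriv g z
          + Cp.eval z * (f z * deriv g z + g z * deriv f z) / 2)
        (x ^ n * f x * g x) x := by
  intro x
  have hf'' : HasDerivAt (deriv f) (x * f x) x := hfode x ▸ (hf' x).hasDerivAt
  have hg'' : HasDerivAt (deriv g) (x * g x) x := hgode x ▸ (hg' x).hasDerivAt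
  have hAC : derivative Ap + X * Cp = X ^ n := by
    rw [hA, hC, derivative_X_mul_sub_C_mul_derivative_derivative, ← hB]
    ring
  have hABC : Ap - X * Bp + C (1 / 2) * derivative Cp = 0 := by
    rw [hA, hC]
    ring
  have hAC_x := congrArg (eval x) hAC
  have hABC_x := congrArg (eval x) hABC
  simp only [eval_add, eval_sub, eval_mul, eval_X, eval_pow, eval_C, eval_zero] at hAC_x hABC_x
  refine (hasDerivAt_quadratic_form_of_deriv_deriv_eq (hf x).hasDerivAt hf'' (hg x).hasDerivAt
    hg'' (Ap.hasDerivAt x) (Bp.hasDerivAt x) (Cp.hasDerivAt x)).congr_deriv ?_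
  rw [hAC_x, ← hC, sub_self]
  linear_combination (f x * deriv g x + g x * deriv f x) * hABC_x
end

section
/- For all (a, b, c) ∈ ℂ³, the system of Fock–Goncharov equations a·c + a + 1 = 0, b·a + b + 1 = 0, c·b + c + 1 = 0 holds if and only if there exists ρ ∈ ℂ with ρ ≠ 0 and ρ ≠ −1 such that a = ρ, b = −1/(ρ + 1), and c = −(ρ + 1)/ρ. In particular, every solution satisfies a·b·c = 1, so the solution set is an affine rational curve in ℂ³. -/
/-!
Each equation has the form `x * (y + 1) = -1`, so it forces `x ≠ 0` and determines `y` from `x`.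
The first two equations therefore express `c` and `b` through `a = ρ`, and the third one is then
automatic. The relation `a * b * c = 1` needs no parametrization: it is `b` times the first
equation minus the second.
-/

section Field

variable {K : Type*} [Field K]

theorem mul_add_self_add_one_eq_zero_iff_right {x y : K} :
    x * y + x + 1 = 0 ↔ x ≠ 0 ∧ y = -(x + 1) / x := by
  constructor
  · intro h
    have hx : x ≠ 0 := by
      rintro rfl
      simp at h
    exact ⟨hx, by rw [eq_div_iff hx]; linear_combination h⟩
  · rintro ⟨hx, rfl⟩
    field_simp
    ring

theorem mul_add_self_add_one_eq_zero_iff_left {x y : K} :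
    y * x + y + 1 = 0 ↔ x + 1 ≠ 0 ∧ y = -1 / (x + 1) := by
  constructor
  · intro h
    have hx : x + 1 ≠ 0 := fun hx => one_ne_zero (by linear_combination h - y * hx : (1 : K) = 0)
    exact ⟨hx, by rw [eq_div_iff hx]; linear_combination h⟩
  · rintro ⟨hx, rfl⟩
    field_simp
    ring

theorem fockGoncharov_system_iff {a b c : K} :
    (a * c + a + 1 = 0 ∧ b * a + b + 1 = 0 ∧ c * b + c + 1 = 0) ↔
      ∃ ρ : K, ρ ≠ 0 ∧ ρ ≠ -1 ∧ a = ρ ∧ b = -1 / (ρ + 1) ∧ c = -(ρ + 1) / ρ := by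
  constructor
  · rintro ⟨h₁, h₂, -⟩
    obtain ⟨ha, hc⟩ := mul_add_self_add_one_eq_zero_iff_right.mp h₁
    obtain ⟨ha₁, hb⟩ := mul_add_self_add_one_eq_zero_iff_left.mp h₂
    exact ⟨a, ha, fun h => ha₁ (eq_neg_iff_add_eq_zero.mp h), rfl, hb, hc⟩
  · rintro ⟨ρ, hρ, hρ₁, ha, rfl, rfl⟩
    subst a
    have hρ₁' : ρ + 1 ≠ 0 := fun h => hρ₁ (eq_neg_iff_add_eq_zero.mpr h)
    refine ⟨mul_add_self_add_one_eq_zero_iff_right.mpr ⟨hρ, rfl⟩,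
      mul_add_self_add_one_eq_zero_iff_left.mpr ⟨hρ₁', rfl⟩, ?_⟩
    field_simp
    ring

end Field

theorem mul_mul_eq_one_of_fockGoncharov {R : Type*} [CommRing R] {a b c : R}
    (h₁ : a * c + a + 1 = 0) (h₂ : b * a + b + 1 = 0) : a * b * c = 1 := by
  linear_combination b * h₁ - h₂

/-- the Fock–Goncharov system a·c + a + 1 = 0, b·a + b + 1 = 0,
c·b + c + 1 = 0 is the rational curve a = ρ, b = −1/(ρ+1), c = −(ρ+1)/ρ
(ρ ≠ 0, −1); moreover every solution satisfies a·b·c = 1. -/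
theorem fock_goncharov_curve (a b c : ℂ) :
    ((a * c + a + 1 = 0 ∧ b * a + b + 1 = 0 ∧ c * b + c + 1 = 0) ↔
      (∃ ρ : ℂ, ρ ≠ 0 ∧ ρ ≠ -1 ∧ a = ρ ∧ b = -1 / (ρ + 1) ∧ c = -(ρ + 1) / ρ)) ∧
    ((a * c + a + 1 = 0 ∧ b * a + b + 1 = 0 ∧ c * b + c + 1 = 0) → a * b * c = 1) :=
  ⟨fockGoncharov_system_iff, fun ⟨h₁, h₂, _⟩ => mul_mul_eq_one_of_fockGoncharov h₁ h₂⟩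
end

section
/- Let α, a ∈ ℂ, let ε ∈ {1, −1}, let U be an open neighbourhood of a, and let h : ℂ → ℂ be holomorphic on U. Suppose that u(t) := ε/(t − a) + h(t) satisfies the second Painlevé equation u''(t) = 2·u(t)³ + t·u(t) + α for all t ∈ U ∖ {a} (so u has a simple pole at a with residue ε). Then h(a) = 0, h'(a) = −ε·a/6, and h''(a) = −(α + ε)/2. Equivalently, near a pole of residue +1 one has u(t) = 1/(t−a) − (a/6)(t−a) − ((α+1)/4)(t−a)² + O((t−a)³), and near a pole of residue −1 one has u(t) = −1/(t−a) + (a/6)(t−a) − ((α−1)/4)(t−a)² + O((t−a)³). -/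
/-!
Clearing the pole of `u = ε/(t - a) + h` from Painlevé II (the `(t - a)⁻³` terms cancel because
`ε³ = ε`) leaves a relation `R(t) = 0` between `t`, `h` and `h''` that is holomorphic at `a`. It
holds on a punctured neighbourhood of `a`, hence near `a`, so `R`, `R'` and `R''` vanish at `a`;
these are `-6 h(a)`, `-6 h'(a) - ε a` and `-4 h''(a) - 2ε - 2α` once `h(a) = 0` is known.
-/

open Filter Topology

section Calculus

variable {𝕜 F : Type*} [NontriviallyNormedField 𝕜] [NormedAddCommGroup F] [NormedSpace 𝕜 F]

theorem deriv_const_mul_sub_zpow (b a : 𝕜) (m : ℤ) :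
    deriv (fun s => b * (s - a) ^ m) = fun t => b * m * (t - a) ^ (m - 1) := by
  funext t
  rw [deriv_comp_sub_const (fun x => b * x ^ m)]
  simp [deriv_zpow, mul_assoc]

theorem deriv_deriv_div_sub (c a : 𝕜) :
    deriv (deriv fun s => c / (s - a)) = fun t => 2 * c / (t - a) ^ 3 := by
  have hzpow : (fun s => c / (s - a)) = fun s => c * (s - a) ^ (-1 : ℤ) := by
    simp [div_eq_mul_inv]
  rw [hzpow, deriv_const_mul_sub_zpow, deriv_const_mul_sub_zpow]
  funext t
  rw [show (-1 : ℤ) - 1 - 1 = -3 by norm_num, zpow_neg, zpow_ofNat]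
  push_cast
  ring

theorem deriv_deriv_fun_add {f g : 𝕜 → F} {t : 𝕜} (hf : ContDiffAt 𝕜 2 f t)
    (hg : ContDiffAt 𝕜 2 g t) :
    deriv (deriv fun s => f s + g s) t = deriv (deriv f) t + deriv (deriv g) t := by
  simpa [iteratedDeriv_succ] using iteratedDeriv_fun_add hf hg

end Calculus

theorem painleveII_cleared_of_ode {K : Type*} [Field K] {α ε a t x y : K} (hε : ε ^ 2 = 1)
    (ht : t ≠ a)
    (hode : 2 * ε / (t - a) ^ 3 + y = 2 * (ε / (t - a) + x) ^ 3 + t * (ε / (t - a) + x) + α) :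
    (t - a) ^ 2 * y - (6 * x + 6 * ε * (t - a) * x ^ 2 + 2 * (t - a) ^ 2 * x ^ 3
      + t * ε * (t - a) + t * (t - a) ^ 2 * x + α * (t - a) ^ 2) = 0 := by
  have hs : t - a ≠ 0 := sub_ne_zero.2 ht
  field_simp at hode
  refine mul_left_cancel₀ hs ?_
  linear_combination hode + (2 * ε + 6 * x * (t - a)) * hε

/-- `(t - a)²` times the Painlevé II defect `u'' - 2u³ - tu - α` of `u = ε/(t - a) + h`, after
the poles have been cancelled using `ε² = 1`. -/
noncomputable def clearedPainleveII (α ε a : ℂ) (h : ℂ → ℂ) (t : ℂ) : ℂ :=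
  (t - a) ^ 2 * deriv (deriv h) t - (6 * h t + 6 * ε * (t - a) * h t ^ 2
    + 2 * (t - a) ^ 2 * h t ^ 3 + t * ε * (t - a) + t * (t - a) ^ 2 * h t + α * (t - a) ^ 2)

section Pole

variable {α ε a : ℂ} {h : ℂ → ℂ}

theorem clearedPainleveII_eventuallyEq_zero {U : Set ℂ} (hε : ε ^ 2 = 1) (hU : IsOpen U)
    (ha : a ∈ U) (hh : AnalyticOnNhd ℂ h U)
    (hode : ∀ t ∈ U \ {a}, deriv (deriv (fun s => ε / (s - a) + h s)) t
      = 2 * (ε / (t - a) + h t) ^ 3 + t * (ε / (t - a) + h t) + α) :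
    clearedPainleveII α ε a h =ᶠ[𝓝 a] 0 := by
  have hh₀ : ContinuousAt h a := (hh a ha).continuousAt
  have hh₂ : ContinuousAt (deriv (deriv h)) a := (hh.deriv.deriv a ha).continuousAt
  have hR : ContinuousAt (clearedPainleveII α ε a h) a := by
    unfold clearedPainleveII
    fun_prop
  refine (hR.eventuallyEq_nhds_iff_eventuallyEq_nhdsNE continuousAt_const).1 ?_
  filter_upwards [sdiff_mem_nhdsWithin_compl (hU.mem_nhds ha) {a}] with t ht
  have hta : t ≠ a := ht.2
  have hpole : ContDiffAt ℂ 2 (fun s => ε / (s - a)) t := by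
    fun_prop (disch := exact sub_ne_zero.2 hta)
  have hu : deriv (deriv fun s => ε / (s - a) + h s) t
      = 2 * ε / (t - a) ^ 3 + deriv (deriv h) t := by
    rw [deriv_deriv_fun_add hpole (hh t ht.1).contDiffAt, deriv_deriv_div_sub]
  exact painleveII_cleared_of_ode hε hta (hu ▸ hode t ht)

attribute [local fun_prop] AnalyticAt.contDiffAt in
theorem eq_of_clearedPainleveII_eventuallyEq_zero (hh : AnalyticAt ℂ h a)
    (hR : clearedPainleveII α ε a h =ᶠ[𝓝 a] 0) :
    h a = 0 ∧ deriv h a = -ε * a / 6 ∧ deriv (deriv h) a = -(α + ε) / 2 := by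
  have hh₂ : AnalyticAt ℂ (deriv (deriv h)) a := hh.deriv.deriv
  have hR' (n : ℕ) : iteratedDeriv n (clearedPainleveII α ε a h) a = 0 := by
    simp [hR.iteratedDeriv_eq, Pi.zero_def]
  have h₀ := hR' 0
  have h₁ := hR' 1
  have h₂ := hR' 2
  unfold clearedPainleveII at h₀ h₁ h₂
  simp (discharger := fun_prop) only [pow_succ, pow_zero, one_mul, iteratedDeriv_fun_add,
    iteratedDeriv_fun_sub, iteratedDeriv_fun_mul, iteratedDeriv_const, iteratedDeriv_fun_id,
    iteratedDeriv_zero, iteratedDeriv_succ, Finset.sum_range_succ, Finset.sum_range_zero,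
    Nat.choose_self, Nat.choose_zero_right, Nat.choose_one_right, Nat.reduceSub,
    Nat.reduceEqDiff, ↓reduceIte] at h₀ h₁ h₂
  have hzero : h a = 0 := by linear_combination -h₀ / 6
  rw [hzero] at h₁ h₂
  exact ⟨hzero, by linear_combination -h₁ / 6, by linear_combination -h₂ / 4⟩

end Pole

/-- Laurent expansion of a Painlevé II transcendent at a simple pole
t = a of residue ε = ±1: if u(t) = ε/(t−a) + h(t) solves PII on U ∖ {a} with h
holomorphic on U, then h(a) = 0, h'(a) = −ε·a/6, h''(a) = −(α+ε)/2. -/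
theorem painleveII_laurent_at_pole
    (α a ε : ℂ) (hε : ε = 1 ∨ ε = -1)
    (U : Set ℂ) (hU : IsOpen U) (ha : a ∈ U)
    (h : ℂ → ℂ) (hh : DifferentiableOn ℂ h U)
    (hode : ∀ t ∈ U \ {a},
      deriv (deriv (fun s => ε / (s - a) + h s)) t
        = 2 * (ε / (t - a) + h t) ^ 3 + t * (ε / (t - a) + h t) + α) :
    h a = 0 ∧ deriv h a = -ε * a / 6 ∧ deriv (deriv h) a = -(α + ε) / 2 := by
  have hε₂ : ε ^ 2 = 1 := by rcases hε with rfl | rfl <;> norm_num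
  have hA : AnalyticOnNhd ℂ h U := hh.analyticOnNhd hU
  exact eq_of_clearedPainleveII_eventuallyEq_zero (hA a ha)
    (clearedPainleveII_eventuallyEq_zero hε₂ hU ha hA hode)
end
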